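/- Let n, m ≥ 2, let G = ZMod n × ZMod m, and let Θ, Θ̃ : G → ℝ be real signals such that F(Θ)_κ ≠ 0 for every κ ∈ G. Let S be the following set of pairs of indices: ((0,0),(0,0)); ((0,0),(1,0)); ((1,0),(k,0)) for 1 ≤ k ≤ n−2; ((0,0),(0,1)); ((0,1),(0,s)) for 1 ≤ s ≤ m−2; and ((0,t),(k,0)) for 1 ≤ t ≤ m−1 and 1 ≤ k ≤ n−1 (a total of n·m pairs). If β(Θ̃)_{κ,κ'} = β(Θ)_{κ,κ'} for every (κ,κ') ∈ S, then there exists (h,h') ∈ G such that Θ̃(g,g') = Θ(g+h, g'+h') for all (g,g') ∈ G. (Selective-bispectrum inversion on a product of two cyclic groups using only |G| = nm coefficients.) -/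

import Mathlib

open Finset

/-- The character of `ZMod n × ZMod m` indexed by `κ = (j, s)`:
`χ_κ(g, g') = exp(2πi·(j̄·ḡ/n + s̄·ḡ'/m))`. -/
noncomputable def prodChar (n m : ℕ) [NeZero n] [NeZero m]
    (κ u : ZMod n × ZMod m) : ℂ :=
  Complex.exp (2 * (Real.pi : ℂ) * Complex.I *
    ((κ.1.val * u.1.val : ℕ) / (n : ℂ) + (κ.2.val * u.2.val : ℕ) / (m : ℂ)))

/-- The Fourier transform on `ZMod n × ZMod m`:
`F(Θ)_κ = Σ_{u} Θ(u) · conj(χ_κ(u))`. -/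
noncomputable def prodDFT (n m : ℕ) [NeZero n] [NeZero m]
    (Θ : ZMod n × ZMod m → ℂ) (κ : ZMod n × ZMod m) : ℂ :=
  ∑ u : ZMod n × ZMod m, Θ u * (starRingEnd ℂ) (prodChar n m κ u)

/-- The bispectrum on `ZMod n × ZMod m`:
`β(Θ)_{κ,κ'} = F(Θ)_κ · F(Θ)_{κ'} · conj(F(Θ)_{κ+κ'})`. -/
noncomputable def prodBispectrum (n m : ℕ) [NeZero n] [NeZero m]
    (Θ : ZMod n × ZMod m → ℂ) (κ κ' : ZMod n × ZMod m) : ℂ :=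
  prodDFT n m Θ κ * prodDFT n m Θ κ' * (starRingEnd ℂ) (prodDFT n m Θ (κ + κ'))

/-!
For a real signal the Fourier transform is Hermitian, `F(-κ) = conj (F κ)`. The coefficient
`β(0,0) = F(0)³` determines `F(0)`, and `β(0,g) = F(0)·|F(g)|²` then determines `|F(g)|` for
the generators `g = (1,0), (0,1)`, so `F̃(g) = u·F(g)` with `|u| = 1`. The identity
`β(g, k g) = F(g)·F(k g)·conj F((k+1) g)` propagates this to `F̃(k g) = uᵏ·F(k g)` along
the axis, and at `k = N - 1` Hermitian symmetry forces `u^N = 1`, so `u` is a character value.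
The coefficients `β((0,t),(k,0))` extend the phases to all of `G`: `F̃(κ) = χ_κ(h)·F(κ)`, the
Fourier transform of the translate of `Θ` by `h`, and the Fourier transform is injective.
-/

open ComplexConjugate ZMod

section PhaseRecovery

variable {G : Type*} [AddCommGroup G]

def tripleProduct (F : G → ℂ) (κ κ' : G) : ℂ :=
  F κ * F κ' * conj (F (κ + κ'))

lemma eq_of_mul_self_mul_conj_eq {a b : ℂ} (ha : conj a = a) (hb : conj b = b)
    (h : a * a * conj a = b * b * conj b) : a = b := by
  rw [← Complex.conj_eq_iff_re.1 ha, ← Complex.conj_eq_iff_re.1 hb] at h ⊢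
  simp only [Complex.conj_ofReal] at h
  have hcube : ((a.re ^ 3 : ℝ) : ℂ) = ((b.re ^ 3 : ℝ) : ℂ) := by
    push_cast
    linear_combination h
  rw [(Odd.pow_inj (⟨1, rfl⟩ : Odd 3)).1 (Complex.ofReal_injective hcube)]

variable {F F' : G → ℂ}

lemma exists_norm_eq_one_of_tripleProduct_zero_eq {g : G} (h0 : F' 0 = F 0) (hF0 : F 0 ≠ 0)
    (hg : F g ≠ 0) (hβ : tripleProduct F' 0 g = tripleProduct F 0 g) :
    ∃ u : ℂ, ‖u‖ = 1 ∧ F' g = u * F g := by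
  refine ⟨F' g / F g, ?_, (div_mul_cancel₀ _ hg).symm⟩
  have hsq : F' g * conj (F' g) = F g * conj (F g) :=
    mul_left_cancel₀ hF0 (by simpa [tripleProduct, h0, mul_assoc] using hβ)
  rw [Complex.mul_conj', Complex.mul_conj'] at hsq
  rw [norm_div, div_eq_one_iff_eq (norm_ne_zero_iff.2 hg)]
  exact_mod_cast (sq_eq_sq₀ (norm_nonneg _) (norm_nonneg _)).1 (by exact_mod_cast hsq)

lemma eq_mul_mul_of_tripleProduct_eq {κ κ' : G} {u v : ℂ} (hu : ‖u‖ = 1) (hv : ‖v‖ = 1)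
    (hκ : F' κ = u * F κ) (hκ' : F' κ' = v * F κ') (hne : F κ * F κ' ≠ 0)
    (hβ : tripleProduct F' κ κ' = tripleProduct F κ κ') :
    F' (κ + κ') = u * v * F (κ + κ') := by
  rw [tripleProduct, tripleProduct, hκ, hκ'] at hβ
  have h1 : u * v * conj (F' (κ + κ')) = conj (F (κ + κ')) :=
    mul_left_cancel₀ hne (by linear_combination hβ)
  have h2 : conj (u * v) * F' (κ + κ') = F (κ + κ') := by simpa using congrArg conj h1
  have h3 : u * v * conj (u * v) = 1 := by
    rw [Complex.mul_conj', norm_mul, hu, hv]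
    norm_num
  calc F' (κ + κ') = u * v * conj (u * v) * F' (κ + κ') := by rw [h3, one_mul]
    _ = u * v * F (κ + κ') := by rw [← h2]; ring

lemma eq_pow_mul_nsmul_of_tripleProduct_eq {g : G} {N : ℕ} {u : ℂ} (hF : ∀ κ, F κ ≠ 0)
    (hu : ‖u‖ = 1) (h0 : F' 0 = F 0) (hg : F' g = u * F g)
    (hβ : ∀ k : ℕ, 1 ≤ k → k ≤ N - 2 →
      tripleProduct F' g (k • g) = tripleProduct F g (k • g)) :
    ∀ k : ℕ, k ≤ N - 1 → F' (k • g) = u ^ k * F (k • g) := by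
  intro k hk
  induction k with
  | zero => simpa using h0
  | succ k ih =>
    rcases Nat.eq_zero_or_pos k with rfl | hk0
    · simpa using hg
    · rw [succ_nsmul', pow_succ']
      exact eq_mul_mul_of_tripleProduct_eq hu (by rw [norm_pow, hu, one_pow]) hg (ih (by omega))
        (mul_ne_zero (hF _) (hF _)) (hβ k hk0 (by omega))

lemma pow_eq_one_of_nsmul_eq_zero {g : G} {N : ℕ} {u : ℂ} (hN0 : N ≠ 0) (hN : N • g = 0)
    (hFc : ∀ κ, conj (F κ) = F (-κ)) (hF'c : ∀ κ, conj (F' κ) = F' (-κ)) (hneg : F (-g) ≠ 0)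
    (hu : ‖u‖ = 1) (hg : F' g = u * F g)
    (hlast : F' ((N - 1) • g) = u ^ (N - 1) * F ((N - 1) • g)) :
    u ^ N = 1 := by
  have hN1 : N - 1 + 1 = N := Nat.sub_add_cancel (Nat.one_le_iff_ne_zero.2 hN0)
  have hlast_eq_neg : (N - 1) • g = -g :=
    eq_neg_of_add_eq_zero_left (by rw [← succ_nsmul, hN1, hN])
  have hconj : F' (-g) = conj u * F (-g) := by rw [← hF'c, hg, map_mul, hFc]
  rw [hlast_eq_neg, hconj] at hlast
  calc u ^ N = u ^ (N - 1) * u := by rw [← pow_succ, hN1]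
    _ = 1 := by
      rw [← mul_right_cancel₀ hneg hlast, mul_comm, Complex.mul_conj', hu]
      norm_num

end PhaseRecovery

lemma exists_stdAddChar_eq_of_pow_eq_one {N : ℕ} [NeZero N] {u : ℂ} (hu : u ^ N = 1) :
    ∃ i : ZMod N, u = stdAddChar i := by
  obtain ⟨i, -, rfl⟩ := (Complex.isPrimitiveRoot_exp N (NeZero.ne N)).eq_pow_of_pow_eq_one hu
  refine ⟨i, ?_⟩
  rw [stdAddChar_apply, toCircle_natCast, ← Complex.exp_nat_mul]
  congr 1
  ring

lemma exists_stdAddChar_phase_of_tripleProduct_eq {G : Type*} [AddCommGroup G] {F F' : G → ℂ}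
    {N : ℕ} [NeZero N] {g : G} (hF : ∀ κ, F κ ≠ 0) (hFc : ∀ κ, conj (F κ) = F (-κ))
    (hF'c : ∀ κ, conj (F' κ) = F' (-κ)) (hN : N • g = 0) (h0 : F' 0 = F 0)
    (hβ0 : tripleProduct F' 0 g = tripleProduct F 0 g)
    (hβ : ∀ k : ℕ, 1 ≤ k → k ≤ N - 2 →
      tripleProduct F' g (k • g) = tripleProduct F g (k • g)) :
    ∃ i : ZMod N, ∀ a : ZMod N, F' (a.val • g) = stdAddChar (a * i) * F (a.val • g) := by
  obtain ⟨u, hu, hg⟩ := exists_norm_eq_one_of_tripleProduct_zero_eq h0 (hF 0) (hF g) hβ0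
  have hpow := eq_pow_mul_nsmul_of_tripleProduct_eq hF hu h0 hg hβ
  obtain ⟨i, rfl⟩ := exists_stdAddChar_eq_of_pow_eq_one <|
    pow_eq_one_of_nsmul_eq_zero (NeZero.ne N) hN hFc hF'c (hF _) hu hg (hpow _ le_rfl)
  refine ⟨i, fun a => ?_⟩
  rw [hpow a.val (Nat.le_sub_one_of_lt a.val_lt), ← AddChar.map_nsmul_eq_pow, nsmul_eq_mul,
    natCast_zmod_val]

section ProdFourier

variable {n m : ℕ} [NeZero n] [NeZero m]

lemma prodChar_eq_stdAddChar (κ u : ZMod n × ZMod m) :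
    prodChar n m κ u = stdAddChar (κ.1 * u.1) * stdAddChar (κ.2 * u.2) := by
  have hval : ∀ {N : ℕ} [NeZero N] (a b : ZMod N), a * b = ((a.val * b.val : ℕ) : ZMod N) := by
    intro N _ a b
    simp
  rw [prodChar, hval κ.1, hval κ.2, stdAddChar_apply, stdAddChar_apply, toCircle_natCast,
    toCircle_natCast, ← Complex.exp_add]
  congr 1
  ring

lemma norm_prodChar (κ u : ZMod n × ZMod m) : ‖prodChar n m κ u‖ = 1 := by
  rw [prodChar_eq_stdAddChar, norm_mul, AddChar.norm_apply, AddChar.norm_apply, one_mul]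

lemma prodChar_add_right (κ u v : ZMod n × ZMod m) :
    prodChar n m κ (u + v) = prodChar n m κ u * prodChar n m κ v := by
  simp only [prodChar_eq_stdAddChar, Prod.fst_add, Prod.snd_add, mul_add,
    AddChar.map_add_eq_mul]
  ring

lemma conj_prodChar (κ u : ZMod n × ZMod m) :
    conj (prodChar n m κ u) = prodChar n m (-κ) u := by
  simp only [prodChar_eq_stdAddChar, map_mul, ← AddChar.map_neg_eq_conj, Prod.fst_neg,
    Prod.snd_neg, neg_mul]

lemma prodDFT_apply_eq_dft_dft (Θ : ZMod n × ZMod m → ℂ) (a : ZMod n) (b : ZMod m) :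
    prodDFT n m Θ (a, b) = 𝓕 (fun j => 𝓕 (fun j' => Θ (j, j')) b) a := by
  simp only [prodDFT, Fintype.sum_prod_type, dft_apply, smul_eq_mul, Finset.mul_sum,
    ← AddChar.map_neg_eq_conj, prodChar_eq_stdAddChar, map_mul, mul_comm a, mul_comm b]
  refine Finset.sum_congr rfl fun j _ => Finset.sum_congr rfl fun j' _ => ?_
  ring

lemma prodDFT_injective : Function.Injective (prodDFT n m) := by
  intro Θ Θ' h
  funext ⟨j, j'⟩
  have hrow : ∀ b, (fun j => 𝓕 (fun j' => Θ (j, j')) b) = fun j => 𝓕 (fun j' => Θ' (j, j')) b :=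
    fun b => dft.injective <| funext fun a => by
      simpa only [prodDFT_apply_eq_dft_dft] using congr_fun h (a, b)
  have hcol : (fun j' => Θ (j, j')) = fun j' => Θ' (j, j') :=
    dft.injective <| funext fun b => congr_fun (hrow b) j
  exact congr_fun hcol j'

lemma prodDFT_comp_add_right (Θ : ZMod n × ZMod m → ℂ) (h κ : ZMod n × ZMod m) :
    prodDFT n m (fun u => Θ (u + h)) κ = prodChar n m κ h * prodDFT n m Θ κ := by
  rw [prodDFT, prodDFT, Finset.mul_sum]
  refine Fintype.sum_equiv (Equiv.addRight h) _ _ fun u => ?_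
  have hunit : prodChar n m κ h * conj (prodChar n m κ h) = 1 := by
    rw [Complex.mul_conj', norm_prodChar]
    norm_num
  rw [Equiv.coe_addRight, prodChar_add_right, map_mul]
  linear_combination (Θ (u + h) * conj (prodChar n m κ u)) * hunit.symm

lemma conj_prodDFT_ofReal (Θ : ZMod n × ZMod m → ℝ) (κ : ZMod n × ZMod m) :
    conj (prodDFT n m (fun u => (Θ u : ℂ)) κ) = prodDFT n m (fun u => (Θ u : ℂ)) (-κ) := by
  simp only [prodDFT, map_sum, map_mul, Complex.conj_ofReal, conj_prodChar]

lemma prodBispectrum_eq_tripleProduct (Θ : ZMod n × ZMod m → ℂ) :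
    prodBispectrum n m Θ = tripleProduct (prodDFT n m Θ) :=
  rfl

lemma eq_prodChar_mul_of_tripleProduct_eq {F F' : ZMod n × ZMod m → ℂ} {i : ZMod n}
    {i' : ZMod m} (hF : ∀ κ, F κ ≠ 0)
    (hfst : ∀ a, F' (a, 0) = stdAddChar (a * i) * F (a, 0))
    (hsnd : ∀ b, F' (0, b) = stdAddChar (b * i') * F (0, b))
    (hβ : ∀ a b, a ≠ 0 → b ≠ 0 →
      tripleProduct F' (0, b) (a, 0) = tripleProduct F (0, b) (a, 0))
    (κ : ZMod n × ZMod m) : F' κ = prodChar n m κ (i, i') * F κ := by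
  obtain ⟨a, b⟩ := κ
  rw [prodChar_eq_stdAddChar]
  by_cases ha : a = 0
  · subst ha
    simpa using hsnd b
  by_cases hb : b = 0
  · subst hb
    simpa using hfst a
  simpa [mul_comm] using eq_mul_mul_of_tripleProduct_eq (AddChar.norm_apply _ _)
    (AddChar.norm_apply _ _) (hsnd b) (hfst a) (mul_ne_zero (hF _) (hF _)) (hβ a b ha hb)

end ProdFourier

theorem selective_bispectrum_inversion_prod_general (n m : ℕ) [NeZero n] [NeZero m]
    (Θ Θ' : ZMod n × ZMod m → ℝ)
    (hF : ∀ κ : ZMod n × ZMod m, prodDFT n m (fun u => (Θ u : ℂ)) κ ≠ 0)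
    (h00 : prodBispectrum n m (fun u => (Θ' u : ℂ)) (0, 0) (0, 0)
         = prodBispectrum n m (fun u => (Θ u : ℂ)) (0, 0) (0, 0))
    (h010 : prodBispectrum n m (fun u => (Θ' u : ℂ)) (0, 0) (1, 0)
          = prodBispectrum n m (fun u => (Θ u : ℂ)) (0, 0) (1, 0))
    (h1k : ∀ k : ℕ, 1 ≤ k → k ≤ n - 2 →
      prodBispectrum n m (fun u => (Θ' u : ℂ)) (1, 0) ((k : ZMod n), 0)
        = prodBispectrum n m (fun u => (Θ u : ℂ)) (1, 0) ((k : ZMod n), 0))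
    (h001 : prodBispectrum n m (fun u => (Θ' u : ℂ)) (0, 0) (0, 1)
          = prodBispectrum n m (fun u => (Θ u : ℂ)) (0, 0) (0, 1))
    (h0s : ∀ s : ℕ, 1 ≤ s → s ≤ m - 2 →
      prodBispectrum n m (fun u => (Θ' u : ℂ)) (0, 1) (0, (s : ZMod m))
        = prodBispectrum n m (fun u => (Θ u : ℂ)) (0, 1) (0, (s : ZMod m)))
    (htk : ∀ t k : ℕ, 1 ≤ t → t ≤ m - 1 → 1 ≤ k → k ≤ n - 1 →
      prodBispectrum n m (fun u => (Θ' u : ℂ)) (0, (t : ZMod m)) ((k : ZMod n), 0)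
        = prodBispectrum n m (fun u => (Θ u : ℂ)) (0, (t : ZMod m)) ((k : ZMod n), 0)) :
    ∃ h : ZMod n, ∃ h' : ZMod m,
      ∀ (g : ZMod n) (g' : ZMod m), Θ' (g, g') = Θ (g + h, g' + h') := by
  simp only [prodBispectrum_eq_tripleProduct] at h00 h010 h1k h001 h0s htk
  set F := prodDFT n m (fun u => (Θ u : ℂ))
  set F' := prodDFT n m (fun u => (Θ' u : ℂ))
  have hFc : ∀ κ, conj (F κ) = F (-κ) := conj_prodDFT_ofReal Θ
  have hF'c : ∀ κ, conj (F' κ) = F' (-κ) := conj_prodDFT_ofReal Θ'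
  have h0 : F' 0 = F 0 := eq_of_mul_self_mul_conj_eq (by simpa using hF'c 0)
    (by simpa using hFc 0) (by simpa [tripleProduct, Prod.mk_zero_zero] using h00)
  obtain ⟨i, hi⟩ := exists_stdAddChar_phase_of_tripleProduct_eq (N := n) (g := (1, 0))
    hF hFc hF'c (by simp) h0 h010 fun k hk hk' => by simpa using h1k k hk hk'
  obtain ⟨i', hi'⟩ := exists_stdAddChar_phase_of_tripleProduct_eq (N := m) (g := (0, 1))
    hF hFc hF'c (by simp) h0 h001 fun s hs hs' => by simpa using h0s s hs hs'
  have hphase : ∀ κ, F' κ = prodChar n m κ (i, i') * F κ :=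
    eq_prodChar_mul_of_tripleProduct_eq hF (fun a => by simpa using hi a)
      (fun b => by simpa using hi' b) fun a b ha hb => by
        simpa using htk b.val a.val (Nat.one_le_iff_ne_zero.2 ((val_ne_zero b).2 hb))
          (Nat.le_sub_one_of_lt b.val_lt) (Nat.one_le_iff_ne_zero.2 ((val_ne_zero a).2 ha))
          (Nat.le_sub_one_of_lt a.val_lt)
  have htranslate : (fun u => (Θ' u : ℂ)) = fun u => (Θ (u + (i, i')) : ℂ) :=
    prodDFT_injective <| funext fun κ => (hphase κ).trans (prodDFT_comp_add_right _ _ κ).symm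
  refine ⟨i, i', fun g g' => ?_⟩
  exact_mod_cast congr_fun htranslate (g, g')

/-- Selective-bispectrum inversion on a product of two cyclic groups using only
`|G| = n·m` bispectral coefficients: equality of the selected coefficients determines
a real signal with nonvanishing Fourier transform up to translation. -/
theorem selective_bispectrum_inversion_prod (n m : ℕ) [NeZero n] [NeZero m]
    (hn : 2 ≤ n) (hm : 2 ≤ m)
    (Θ Θ' : ZMod n × ZMod m → ℝ)
    (hF : ∀ κ : ZMod n × ZMod m, prodDFT n m (fun u => (Θ u : ℂ)) κ ≠ 0)
    (h00 : prodBispectrum n m (fun u => (Θ' u : ℂ)) (0, 0) (0, 0)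
         = prodBispectrum n m (fun u => (Θ u : ℂ)) (0, 0) (0, 0))
    (h010 : prodBispectrum n m (fun u => (Θ' u : ℂ)) (0, 0) (1, 0)
          = prodBispectrum n m (fun u => (Θ u : ℂ)) (0, 0) (1, 0))
    (h1k : ∀ k : ℕ, 1 ≤ k → k ≤ n - 2 →
      prodBispectrum n m (fun u => (Θ' u : ℂ)) (1, 0) ((k : ZMod n), 0)
        = prodBispectrum n m (fun u => (Θ u : ℂ)) (1, 0) ((k : ZMod n), 0))
    (h001 : prodBispectrum n m (fun u => (Θ' u : ℂ)) (0, 0) (0, 1)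
          = prodBispectrum n m (fun u => (Θ u : ℂ)) (0, 0) (0, 1))
    (h0s : ∀ s : ℕ, 1 ≤ s → s ≤ m - 2 →
      prodBispectrum n m (fun u => (Θ' u : ℂ)) (0, 1) (0, (s : ZMod m))
        = prodBispectrum n m (fun u => (Θ u : ℂ)) (0, 1) (0, (s : ZMod m)))
    (htk : ∀ t k : ℕ, 1 ≤ t → t ≤ m - 1 → 1 ≤ k → k ≤ n - 1 →
      prodBispectrum n m (fun u => (Θ' u : ℂ)) (0, (t : ZMod m)) ((k : ZMod n), 0)
        = prodBispectrum n m (fun u => (Θ u : ℂ)) (0, (t : ZMod m)) ((k : ZMod n), 0)) :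
    ∃ h : ZMod n, ∃ h' : ZMod m,
      ∀ (g : ZMod n) (g' : ZMod m), Θ' (g, g') = Θ (g + h, g' + h') :=
  selective_bispectrum_inversion_prod_general n m Θ Θ' hF h00 h010 h1k h001 h0s htk
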